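/- arXiv:2509.15816 — 7 statements merged into one kernel-verified Lean document; each statement's English description precedes it below -/
import Mathlib

section
/- (Descent lemma for one Muon step.) Let f : ℝ^{m×n} → ℝ be differentiable and L-smooth, let X, M ∈ ℝ^{m×n}, and let O ∈ ℝ^{m×n} satisfy Oᵀ O = I_n and ⟨M, O⟩_F = ‖M‖_∗. Set X' = X − η O for some η > 0. Then for every α > 0, f(X') ≤ f(X) − η ‖M‖_F + (η α / 2) ‖∇f(X) − M‖_F² + η n / (2α) + L η² n / 2. -/
open Real Matrix
open scoped RealInnerProductSpace

/-- The `m × n` matrix associated to an element of `EuclideanSpace ℝ (Fin m × Fin n)`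
(whose norm is the Frobenius norm and whose inner product is the Frobenius inner product). -/
noncomputable def toMat {m n : ℕ} (A : EuclideanSpace ℝ (Fin m × Fin n)) :
    Matrix (Fin m) (Fin n) ℝ :=
  Matrix.of fun i j => A (i, j)

/-- The nuclear norm of a real matrix: the sum of its singular values, i.e. of the
square roots of the eigenvalues of `Mᴴ M = Mᵀ M`. -/
noncomputable def nuclearNorm {m n : ℕ} (M : Matrix (Fin m) (Fin n) ℝ) : ℝ :=
  ∑ i, Real.sqrt ((Matrix.isHermitian_conjTranspose_mul_self M).eigenvalues i)

/-!
Taylor's bound for an `L`-smooth function gives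
`f(X - ηO) ≤ f(X) - η⟪∇f(X), O⟫ + Lη²‖O‖²/2`, and `‖O‖² = tr(OᵀO) = n`.
Split `⟪∇f(X), O⟫ = ⟪M, O⟫ + ⟪∇f(X) - M, O⟫`: the first term is `‖M‖_* ≥ ‖M‖_F`, and the
second is bounded below by Young's inequality `-⟪G, O⟫ ≤ (α/2)‖G‖² + ‖O‖²/(2α)`.
-/

section LipschitzGradient

variable {E : Type*} [NormedAddCommGroup E] [InnerProductSpace ℝ E]
  {f : E → ℝ} {f' : E → E} {L : ℝ}

lemma hasDerivAt_comp_add_smul [CompleteSpace E] (hgrad : ∀ Y, HasGradientAt f (f' Y) Y)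
    (X V : E) (t : ℝ) :
    HasDerivAt (fun s : ℝ => f (X + s • V)) ⟪f' (X + t • V), V⟫ t := by
  have hline : HasDerivAt (fun s : ℝ => X + s • V) V t := by
    simpa using ((hasDerivAt_id t).smul_const V).const_add X
  simpa [Function.comp_def] using (hgrad (X + t • V)).hasFDerivAt.comp_hasDerivAt t hline

lemma inner_sub_gradient_le (hsmooth : ∀ Y₁ Y₂, ‖f' Y₂ - f' Y₁‖ ≤ L * ‖Y₂ - Y₁‖)
    (X V : E) {t : ℝ} (ht : 0 ≤ t) :
    ⟪f' (X + t • V) - f' X, V⟫ ≤ L * t * ‖V‖ ^ 2 :=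
  calc ⟪f' (X + t • V) - f' X, V⟫ ≤ ‖f' (X + t • V) - f' X‖ * ‖V‖ := real_inner_le_norm _ _
    _ ≤ L * ‖X + t • V - X‖ * ‖V‖ := by gcongr; exact hsmooth _ _
    _ = L * t * ‖V‖ ^ 2 := by
      rw [add_sub_cancel_left, norm_smul, Real.norm_of_nonneg ht]; ring

theorem le_add_inner_add_sq_of_lipschitz_gradient [CompleteSpace E]
    (hgrad : ∀ Y, HasGradientAt f (f' Y) Y)
    (hsmooth : ∀ Y₁ Y₂, ‖f' Y₂ - f' Y₁‖ ≤ L * ‖Y₂ - Y₁‖) (X V : E) :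
    f (X + V) ≤ f X + ⟪f' X, V⟫ + L / 2 * ‖V‖ ^ 2 := by
  set φ : ℝ → ℝ := fun t => f (X + t • V) - t * ⟪f' X, V⟫ - L / 2 * ‖V‖ ^ 2 * t ^ 2
  have hφ : ∀ t, HasDerivAt φ (⟪f' (X + t • V) - f' X, V⟫ - L * t * ‖V‖ ^ 2) t := by
    intro t
    refine (((hasDerivAt_comp_add_smul hgrad X V t).sub
      ((hasDerivAt_id t).mul_const ⟪f' X, V⟫)).sub
      ((hasDerivAt_pow 2 t).const_mul (L / 2 * ‖V‖ ^ 2))).congr_deriv ?_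
    rw [inner_sub_left]
    simp only [one_mul, Nat.cast_ofNat, Nat.add_one_sub_one, pow_one, sub_right_inj]
    ring
  have hanti : AntitoneOn φ (Set.Ici 0) := by
    refine antitoneOn_of_deriv_nonpos (convex_Ici 0)
      (continuous_iff_continuousAt.2 fun t => (hφ t).continuousAt).continuousOn
      (fun t _ => (hφ t).differentiableAt.differentiableWithinAt) fun t ht => ?_
    rw [interior_Ici] at ht
    rw [(hφ t).deriv]
    exact sub_nonpos.2 (inner_sub_gradient_le hsmooth X V (le_of_lt ht))
  have := hanti Set.self_mem_Ici (Set.mem_Ici.2 zero_le_one) zero_le_one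
  simp only [φ, zero_smul, add_zero, zero_mul, one_smul, one_mul, one_pow, sub_zero] at this
  linarith

end LipschitzGradient

lemma real_inner_le_mul_norm_sq_add_norm_sq_div {E : Type*} [NormedAddCommGroup E]
    [InnerProductSpace ℝ E] (x y : E) {α : ℝ} (hα : 0 < α) :
    ⟪x, y⟫ ≤ α / 2 * ‖x‖ ^ 2 + ‖y‖ ^ 2 / (2 * α) := by
  have hyoung : ‖x‖ * ‖y‖ ≤ α / 2 * ‖x‖ ^ 2 + ‖y‖ ^ 2 / (2 * α) := by
    field_simp
    nlinarith [sq_nonneg (α * ‖x‖ - ‖y‖)]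
  exact (real_inner_le_norm x y).trans hyoung

section Frobenius

variable {m n : ℕ}

lemma inner_eq_trace_transpose_mul (A B : EuclideanSpace ℝ (Fin m × Fin n)) :
    ⟪A, B⟫ = ((toMat A)ᵀ * toMat B).trace := by
  simp only [PiLp.inner_apply, RCLike.inner_apply, conj_trivial, Matrix.trace,
    Matrix.diag_apply, Matrix.mul_apply, Matrix.transpose_apply, toMat, Matrix.of_apply]
  rw [Fintype.sum_prod_type, Finset.sum_comm]
  simp only [mul_comm]

lemma norm_sq_eq_trace_transpose_mul_self (A : EuclideanSpace ℝ (Fin m × Fin n)) :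
    ‖A‖ ^ 2 = ((toMat A)ᵀ * toMat A).trace := by
  rw [← real_inner_self_eq_norm_sq, inner_eq_trace_transpose_mul]

lemma norm_sq_eq_of_transpose_mul_self_eq_one {O : EuclideanSpace ℝ (Fin m × Fin n)}
    (hO : (toMat O)ᵀ * toMat O = 1) : ‖O‖ ^ 2 = n := by
  rw [norm_sq_eq_trace_transpose_mul_self, hO, Matrix.trace_one, Fintype.card_fin]

lemma trace_transpose_mul_self_le_nuclearNorm_sq (M : Matrix (Fin m) (Fin n) ℝ) :
    (Mᵀ * M).trace ≤ nuclearNorm M ^ 2 := by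
  have hH := Matrix.isHermitian_conjTranspose_mul_self M
  have heig : ∀ i, 0 ≤ hH.eigenvalues i := fun i => by
    simpa using (Matrix.posSemidef_conjTranspose_mul_self M).eigenvalues_nonneg i
  have htrace : (Mᵀ * M).trace = ∑ i, Real.sqrt (hH.eigenvalues i) ^ 2 := by
    rw [← Matrix.conjTranspose_eq_transpose_of_trivial, hH.trace_eq_sum_eigenvalues]
    simp only [RCLike.ofReal_real_eq_id, id, Real.sq_sqrt (heig _)]
  rw [htrace, nuclearNorm]
  exact Finset.sum_sq_le_sq_sum_of_nonneg fun i _ => Real.sqrt_nonneg _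

lemma norm_le_nuclearNorm (A : EuclideanSpace ℝ (Fin m × Fin n)) :
    ‖A‖ ≤ nuclearNorm (toMat A) := by
  refine le_of_sq_le_sq ?_ (Finset.sum_nonneg fun i _ => Real.sqrt_nonneg _)
  rw [norm_sq_eq_trace_transpose_mul_self]
  exact trace_transpose_mul_self_le_nuclearNorm_sq _

end Frobenius

theorem muon_descent_lemma_general
    (m n : ℕ)
    (f : EuclideanSpace ℝ (Fin m × Fin n) → ℝ)
    (f' : EuclideanSpace ℝ (Fin m × Fin n) → EuclideanSpace ℝ (Fin m × Fin n))
    (L : ℝ)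
    (hgrad : ∀ Y, HasGradientAt f (f' Y) Y)
    (hsmooth : ∀ Y₁ Y₂, ‖f' Y₂ - f' Y₁‖ ≤ L * ‖Y₂ - Y₁‖)
    (X M O : EuclideanSpace ℝ (Fin m × Fin n))
    (hO : (toMat O)ᵀ * toMat O = 1)
    (hMO : ⟪M, O⟫ = nuclearNorm (toMat M))
    (η : ℝ) (hη : 0 < η) (α : ℝ) (hα : 0 < α) :
    f (X - η • O) ≤ f X - η * ‖M‖ + (η * α / 2) * ‖f' X - M‖ ^ 2
      + η * n / (2 * α) + L * η ^ 2 * n / 2 := by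
  have hstep := le_add_inner_add_sq_of_lipschitz_gradient hgrad hsmooth X (-(η • O))
  have hO_norm : ‖O‖ ^ 2 = n := norm_sq_eq_of_transpose_mul_self_eq_one hO
  have hM : ‖M‖ ≤ ⟪M, O⟫ := hMO ▸ norm_le_nuclearNorm M
  have hyoung := real_inner_le_mul_norm_sq_add_norm_sq_div (f' X - M) (-O) hα
  have hsplit : ⟪f' X, -(η • O)⟫ = η * (⟪f' X - M, -O⟫ - ⟪M, O⟫) := by
    simp only [inner_neg_right, real_inner_smul_right, inner_sub_left]; ring
  have hstep_norm : ‖-(η • O)‖ ^ 2 = η ^ 2 * n := by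
    rw [norm_neg, norm_smul, mul_pow, hO_norm, Real.norm_of_nonneg hη.le]
  rw [← sub_eq_add_neg, hsplit, hstep_norm] at hstep
  rw [norm_neg, hO_norm] at hyoung
  linear_combination hstep + η * hyoung + η * hM

/-- **Descent lemma for one Muon step** (Lemma 1): if `f` is `L`-smooth, `Oᵀ O = I_n`,
`⟨M, O⟩_F = ‖M‖_*`, and `X' = X - η O`, then for every `α > 0`,
`f(X') ≤ f(X) - η ‖M‖_F + (η α / 2) ‖∇f(X) - M‖_F² + η n / (2α) + L η² n / 2`. -/
theorem muon_descent_lemma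
    (m n : ℕ) (hmn : n ≤ m) (hn : 1 ≤ n)
    (f : EuclideanSpace ℝ (Fin m × Fin n) → ℝ)
    (f' : EuclideanSpace ℝ (Fin m × Fin n) → EuclideanSpace ℝ (Fin m × Fin n))
    (L : ℝ) (hL : 0 < L)
    (hgrad : ∀ Y, HasGradientAt f (f' Y) Y)
    (hsmooth : ∀ Y₁ Y₂, ‖f' Y₂ - f' Y₁‖ ≤ L * ‖Y₂ - Y₁‖)
    (X M O : EuclideanSpace ℝ (Fin m × Fin n))
    (hO : (toMat O)ᵀ * toMat O = 1)
    (hMO : ⟪M, O⟫ = nuclearNorm (toMat M))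
    (η : ℝ) (hη : 0 < η) (α : ℝ) (hα : 0 < α) :
    f (X - η • O) ≤ f X - η * ‖M‖ + (η * α / 2) * ‖f' X - M‖ ^ 2
      + η * n / (2 * α) + L * η ^ 2 * n / 2 :=
  muon_descent_lemma_general m n f f' L hgrad hsmooth X M O hO hMO η hη α hα
end

section
/- (One-step momentum error recursion, EMA estimator.) Let f : ℝ^{m×n} → ℝ be differentiable and L-smooth, and let G be a stochastic gradient oracle for f that is unbiased with variance bounded by σ². On a probability space, let X and M be random m×n matrices measurable with respect to a sub-σ-algebra 𝓕, with E‖M − ∇f(X)‖_F² < ∞; let O be an 𝓕-measurable random m×n matrix with ‖O‖_F² ≤ n almost surely, and set X' = X − η O for some η > 0. Let ξ be a Z-valued random variable with law μ, independent of 𝓕, and for β ∈ (0,1) set M' = β M + (1−β) G(X', ξ). Then E‖M' − ∇f(X')‖_F² ≤ β · E‖M − ∇f(X)‖_F² + (β²/(1−β)) L² η² n + (1−β)² σ². -/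
open MeasureTheory ProbabilityTheory Real
open scoped RealInnerProductSpace

/-!
Write `M' - ∇f(X') = S + (1 - β) D` with the bias `S = β (M - ∇f(X'))`, a function of the past,
and the noise `D = G(X', ξ) - ∇f(X')`. As `ξ` is independent of the past, one may integrate over
`ξ` first with the past frozen: this kills the cross term `E⟪S, D⟫` and bounds `E‖D‖²` by `σ²`.
The bias is bounded pointwise by Young's inequality
`‖β (a + b)‖² ≤ β ‖a‖² + β² / (1 - β) ‖b‖²` with `a = M - ∇f(X)` and `b = ∇f(X) - ∇f(X')`,
where `‖b‖ ≤ L η ‖O‖` by smoothness.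
-/

section Deterministic

variable {E : Type*} [NormedAddCommGroup E] [InnerProductSpace ℝ E]

theorem norm_smul_add_sq_le {β : ℝ} (hβ0 : 0 ≤ β) (hβ1 : β < 1) (a b : E) :
    ‖β • (a + b)‖ ^ 2 ≤ β * ‖a‖ ^ 2 + β ^ 2 / (1 - β) * ‖b‖ ^ 2 := by
  have hβ : 0 < 1 - β := by linarith
  rw [norm_smul, Real.norm_of_nonneg hβ0, mul_pow, norm_add_sq_real, ← sub_nonneg]
  have key : β * ‖a‖ ^ 2 + β ^ 2 / (1 - β) * ‖b‖ ^ 2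
      - β ^ 2 * (‖a‖ ^ 2 + 2 * ⟪a, b⟫ + ‖b‖ ^ 2)
      = β * (1 - β) * ‖a - (β / (1 - β)) • b‖ ^ 2 := by
    rw [norm_sub_sq_real, inner_smul_right, norm_smul, Real.norm_of_nonneg (by positivity)]
    field_simp
    ring
  rw [key]
  positivity

theorem norm_smul_sub_sq_le_of_lipschitz {F : E → E} {L : ℝ}
    (hF : ∀ x y, ‖F y - F x‖ ≤ L * ‖y - x‖) {β : ℝ} (hβ0 : 0 ≤ β) (hβ1 : β < 1)
    (m x o : E) (η : ℝ) :
    ‖β • (m - F (x - η • o))‖ ^ 2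
      ≤ β * ‖m - F x‖ ^ 2 + β ^ 2 / (1 - β) * (L ^ 2 * η ^ 2 * ‖o‖ ^ 2) := by
  have hshift : ‖F x - F (x - η • o)‖ ^ 2 ≤ L ^ 2 * η ^ 2 * ‖o‖ ^ 2 := by
    have h := hF (x - η • o) x
    rw [sub_sub_cancel, norm_smul, Real.norm_eq_abs] at h
    calc ‖F x - F (x - η • o)‖ ^ 2 ≤ (L * (|η| * ‖o‖)) ^ 2 := by gcongr
      _ = L ^ 2 * η ^ 2 * ‖o‖ ^ 2 := by rw [mul_pow, mul_pow, sq_abs, mul_assoc]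
  calc ‖β • (m - F (x - η • o))‖ ^ 2
      = ‖β • ((m - F x) + (F x - F (x - η • o)))‖ ^ 2 := by rw [sub_add_sub_cancel]
    _ ≤ β * ‖m - F x‖ ^ 2 + β ^ 2 / (1 - β) * ‖F x - F (x - η • o)‖ ^ 2 :=
      norm_smul_add_sq_le hβ0 hβ1 _ _
    _ ≤ _ := by gcongr

end Deterministic

theorem integral_sub_integral_eq_zero {Z E : Type*} [MeasurableSpace Z] {μ : Measure Z}
    [IsProbabilityMeasure μ] [NormedAddCommGroup E] [NormedSpace ℝ E] [CompleteSpace E]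
    (f : Z → E) :
    ∫ z, (f z - ∫ w, f w ∂μ) ∂μ = 0 := by
  by_cases hf : Integrable f μ
  · rw [integral_sub hf (integrable_const _), integral_const, probReal_univ, one_smul, sub_self]
  · exact integral_undef fun h => hf <|
      (h.add (integrable_const (∫ w, f w ∂μ))).congr (.of_forall fun z => by simp)

section SquareIntegrable

variable {Ω E : Type*} [MeasurableSpace Ω] {P : Measure Ω} [NormedAddCommGroup E]

theorem memLp_two_of_sq_norm_le {S : Ω → E} (hS : AEStronglyMeasurable S P) {b : Ω → ℝ}
    (hb : Integrable b P) (hSb : ∀ᵐ ω ∂P, ‖S ω‖ ^ 2 ≤ b ω) : MemLp S 2 P :=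
  (memLp_two_iff_integrable_sq_norm hS).2 <| hb.mono' (hS.norm.pow 2) <|
    hSb.mono fun ω h => by rwa [Real.norm_of_nonneg (by positivity)]

variable [InnerProductSpace ℝ E]

theorem MeasureTheory.MemLp.integrable_inner {S D : Ω → E} (hS : MemLp S 2 P) (hD : MemLp D 2 P) :
    Integrable (fun ω => ⟪S ω, D ω⟫) P :=
  (L2.integrable_inner (𝕜 := ℝ) (hS.toLp S) (hD.toLp D)).congr <|
    hS.coeFn_toLp.mp <| hD.coeFn_toLp.mono fun _ hD hS => by simp only [hS, hD]

theorem integral_norm_add_smul_sq {S D : Ω → E} (hS : MemLp S 2 P) (hD : MemLp D 2 P) (c : ℝ) :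
    ∫ ω, ‖S ω + c • D ω‖ ^ 2 ∂P
      = ∫ ω, ‖S ω‖ ^ 2 ∂P + 2 * c * ∫ ω, ⟪S ω, D ω⟫ ∂P + c ^ 2 * ∫ ω, ‖D ω‖ ^ 2 ∂P := by
  have hS2 := (memLp_two_iff_integrable_sq_norm hS.1).1 hS
  have hD2 := (memLp_two_iff_integrable_sq_norm hD.1).1 hD
  have hSD := hS.integrable_inner hD
  have hexpand : ∀ ω, ‖S ω + c • D ω‖ ^ 2
      = (‖S ω‖ ^ 2 + 2 * c * ⟪S ω, D ω⟫) + c ^ 2 * ‖D ω‖ ^ 2 := fun ω => by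
    rw [norm_add_sq_real, inner_smul_right, norm_smul, mul_pow, Real.norm_eq_abs, sq_abs]
    ring
  simp_rw [hexpand]
  rw [integral_add _ (hD2.const_mul _), integral_add hS2 (hSD.const_mul _), integral_const_mul,
    integral_const_mul]
  exact hS2.add (hSD.const_mul _)

end SquareIntegrable

namespace ProbabilityTheory.IndepFun

variable {Ω α Z : Type*} [MeasurableSpace Ω] [MeasurableSpace α] [MeasurableSpace Z]
  {P : Measure Ω} [IsProbabilityMeasure P] {μ : Measure Z}
  {Y : Ω → α} {ξ : Ω → Z}

theorem map_prodMk_eq_prod (hind : IndepFun Y ξ P)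
    (hY : Measurable Y) (hξ : Measurable ξ) (hlaw : P.map ξ = μ) :
    P.map (fun ω => (Y ω, ξ ω)) = (P.map Y).prod μ := by
  rw [← hlaw]
  exact (indepFun_iff_map_prod_eq_prod_map_map hY.aemeasurable hξ.aemeasurable).1 hind

theorem integrable_prod_of_integrable_comp (hind : IndepFun Y ξ P)
    (hY : Measurable Y) (hξ : Measurable ξ) (hlaw : P.map ξ = μ) {Φ : α × Z → ℝ}
    (hΦ : Measurable Φ) (hint : Integrable (fun ω => Φ (Y ω, ξ ω)) P) :
    Integrable Φ ((P.map Y).prod μ) := by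
  rw [← hind.map_prodMk_eq_prod hY hξ hlaw]
  exact (integrable_map_measure hΦ.aestronglyMeasurable (hY.prodMk hξ).aemeasurable).2 hint

/-- The freezing lemma, in integrated form. -/
theorem integral_comp_eq_integral_integral [SFinite μ] (hind : IndepFun Y ξ P)
    (hY : Measurable Y) (hξ : Measurable ξ) (hlaw : P.map ξ = μ) {Φ : α × Z → ℝ}
    (hΦ : Measurable Φ) (hint : Integrable (fun ω => Φ (Y ω, ξ ω)) P) :
    ∫ ω, Φ (Y ω, ξ ω) ∂P = ∫ a, ∫ z, Φ (a, z) ∂μ ∂(P.map Y) := by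
  rw [← integral_prod _ (hind.integrable_prod_of_integrable_comp hY hξ hlaw hΦ hint),
    ← hind.map_prodMk_eq_prod hY hξ hlaw,
    integral_map (hY.prodMk hξ).aemeasurable hΦ.aestronglyMeasurable]

variable [IsFiniteMeasure μ]
  {E : Type*} [NormedAddCommGroup E] [MeasurableSpace E] [BorelSpace E] {g : α → Z → E}

theorem integral_sq_norm_le (hind : IndepFun Y ξ P)
    (hY : Measurable Y) (hξ : Measurable ξ) (hlaw : P.map ξ = μ)
    (hg : Measurable (Function.uncurry g)) {C : ℝ} (hvar : ∀ a, ∫ z, ‖g a z‖ ^ 2 ∂μ ≤ C)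
    (hD : MemLp (fun ω => g (Y ω) (ξ ω)) 2 P) :
    ∫ ω, ‖g (Y ω) (ξ ω)‖ ^ 2 ∂P ≤ C := by
  rw [hind.integral_comp_eq_integral_integral (Φ := fun p => ‖g p.1 p.2‖ ^ 2) hY hξ hlaw
      (hg.norm.pow_const 2)
      ((memLp_two_iff_integrable_sq_norm hD.1).1 hD)]
  calc ∫ a, ∫ z, ‖g a z‖ ^ 2 ∂μ ∂(P.map Y) ≤ ∫ _, C ∂(P.map Y) :=
        integral_mono_of_nonneg (.of_forall fun _ => integral_nonneg fun _ => by positivity)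
          (integrable_const C) (.of_forall hvar)
    _ = C := by
      have := Measure.isProbabilityMeasure_map (μ := P) hY.aemeasurable
      simp

variable [InnerProductSpace ℝ E] [CompleteSpace E] [SecondCountableTopology E]

theorem integral_inner_eq_zero (hind : IndepFun Y ξ P)
    (hY : Measurable Y) (hξ : Measurable ξ) (hlaw : P.map ξ = μ) {h : α → E}
    (hh : Measurable h) (hg : Measurable (Function.uncurry g))
    (hcentered : ∀ a, ∫ z, g a z ∂μ = 0) (hS : MemLp (fun ω => h (Y ω)) 2 P)
    (hD : MemLp (fun ω => g (Y ω) (ξ ω)) 2 P) :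
    ∫ ω, ⟪h (Y ω), g (Y ω) (ξ ω)⟫ ∂P = 0 := by
  have hslice : ∀ᵐ a ∂(P.map Y), Integrable (g a) μ := by
    have hD2 := hind.integrable_prod_of_integrable_comp hY hξ hlaw (hg.norm.pow_const 2)
      ((memLp_two_iff_integrable_sq_norm hD.1).1 hD)
    filter_upwards [hD2.prod_right_ae] with a ha
    have hga : Measurable (g a) := hg.comp measurable_prodMk_left
    exact ((memLp_two_iff_integrable_sq_norm hga.aestronglyMeasurable).2 ha).integrable
      one_le_two
  rw [hind.integral_comp_eq_integral_integral (Φ := fun p => ⟪h p.1, g p.1 p.2⟫) hY hξ hlaw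
      ((hh.comp measurable_fst).inner hg) (hS.integrable_inner hD)]
  refine integral_eq_zero_of_ae (hslice.mono fun a ha => ?_)
  simp only [integral_inner ha, hcentered, inner_zero_right, Pi.zero_apply]

theorem integral_norm_add_smul_sq_le (hind : IndepFun Y ξ P)
    (hY : Measurable Y) (hξ : Measurable ξ) (hlaw : P.map ξ = μ) {h : α → E}
    (hh : Measurable h) (hg : Measurable (Function.uncurry g))
    (hcentered : ∀ a, ∫ z, g a z ∂μ = 0) {C : ℝ} (hC : 0 ≤ C)
    (hvar : ∀ a, ∫ z, ‖g a z‖ ^ 2 ∂μ ≤ C) (hS : MemLp (fun ω => h (Y ω)) 2 P) (c : ℝ) :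
    ∫ ω, ‖h (Y ω) + c • g (Y ω) (ξ ω)‖ ^ 2 ∂P ≤ ∫ ω, ‖h (Y ω)‖ ^ 2 ∂P + c ^ 2 * C := by
  by_cases hD : MemLp (fun ω => g (Y ω) (ξ ω)) 2 P
  · rw [integral_norm_add_smul_sq hS hD,
      hind.integral_inner_eq_zero hY hξ hlaw hh hg hcentered hS hD, mul_zero, add_zero]
    gcongr
    exact hind.integral_sq_norm_le hY hξ hlaw hg hvar hD
  rcases eq_or_ne c 0 with rfl | hc
  · simp
  -- Outside `L²` the left side is the junk value `0`.
  have hsum : ¬ Integrable (fun ω => ‖h (Y ω) + c • g (Y ω) (ξ ω)‖ ^ 2) P := fun hint => by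
    have hmeas := ((hh.comp hY).add ((hg.comp (hY.prodMk hξ)).const_smul c)).aestronglyMeasurable
      (μ := P)
    have hsum := (memLp_two_iff_integrable_sq_norm hmeas).2 hint
    refine hD ((hsum.sub hS).const_smul c⁻¹ |>.ae_eq (.of_forall fun ω => ?_))
    simp [smul_smul, hc]
  rw [integral_undef hsum]
  positivity

end ProbabilityTheory.IndepFun

theorem integral_norm_momentum_sub_sq_le {E : Type*} [NormedAddCommGroup E]
    [InnerProductSpace ℝ E] [CompleteSpace E] [MeasurableSpace E] [BorelSpace E]
    [SecondCountableTopology E] {Ω Z : Type*} [mΩ : MeasurableSpace Ω] [MeasurableSpace Z]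
    {P : Measure Ω} [IsProbabilityMeasure P] {μ : Measure Z} [IsProbabilityMeasure μ]
    {F : E → E} {L : ℝ} (hF : ∀ x y, ‖F y - F x‖ ≤ L * ‖y - x‖)
    {G : E → Z → E} (hG : Measurable (Function.uncurry G)) (hunbiased : ∀ x, ∫ z, G x z ∂μ = F x)
    {σ : ℝ} (hvar : ∀ x, ∫ z, ‖G x z - F x‖ ^ 2 ∂μ ≤ σ ^ 2)
    {ξ : Ω → Z} (hξ : Measurable ξ) (hlaw : P.map ξ = μ)
    {X M O : Ω → E} {η : ℝ} (hY : Measurable fun ω => (M ω, X ω - η • O ω))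
    (hind : IndepFun (fun ω => (M ω, X ω - η • O ω)) ξ P)
    (hint : Integrable (fun ω => ‖M ω - F (X ω)‖ ^ 2) P)
    {r : ℝ} (hO : ∀ᵐ ω ∂P, ‖O ω‖ ^ 2 ≤ r) {β : ℝ} (hβ0 : 0 ≤ β) (hβ1 : β < 1) :
    ∫ ω, ‖(β • M ω + (1 - β) • G (X ω - η • O ω) (ξ ω)) - F (X ω - η • O ω)‖ ^ 2 ∂P ≤
      β * ∫ ω, ‖M ω - F (X ω)‖ ^ 2 ∂P
        + (β ^ 2 / (1 - β)) * L ^ 2 * η ^ 2 * r + (1 - β) ^ 2 * σ ^ 2 := by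
  have hF' : Measurable F := (LipschitzWith.of_dist_le' fun x y => by
    simpa only [dist_eq_norm] using hF y x).continuous.measurable
  let bias := fun p : E × E => β • (p.1 - F p.2)
  let noise := fun (p : E × E) z => G p.2 z - F p.2
  have hcentered : ∀ p, ∫ z, noise p z ∂μ = 0 := fun p => by
    simpa only [noise, hunbiased] using integral_sub_integral_eq_zero (μ := μ) (G p.2)
  have hbias : ∀ᵐ ω ∂P, ‖bias (M ω, X ω - η • O ω)‖ ^ 2
      ≤ β * ‖M ω - F (X ω)‖ ^ 2 + β ^ 2 / (1 - β) * (L ^ 2 * η ^ 2 * r) := by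
    filter_upwards [hO] with ω hω
    exact (norm_smul_sub_sq_le_of_lipschitz hF hβ0 hβ1 _ _ _ η).trans (by gcongr)
  have hbound := (hint.const_mul β).add (integrable_const (β ^ 2 / (1 - β) * (L ^ 2 * η ^ 2 * r)))
  have hbias_meas : Measurable bias := (measurable_fst.sub (hF'.comp measurable_snd)).const_smul β
  have hS : MemLp (fun ω => bias (M ω, X ω - η • O ω)) 2 P :=
    memLp_two_of_sq_norm_le (hbias_meas.comp hY).aestronglyMeasurable hbound hbias
  calc _ = ∫ ω, ‖bias (M ω, X ω - η • O ω)
          + (1 - β) • noise (M ω, X ω - η • O ω) (ξ ω)‖ ^ 2 ∂P := by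
        congr with ω
        congr 2
        module
    _ ≤ ∫ ω, ‖bias (M ω, X ω - η • O ω)‖ ^ 2 ∂P + (1 - β) ^ 2 * σ ^ 2 :=
        hind.integral_norm_add_smul_sq_le hY hξ hlaw hbias_meas
          ((hG.comp (measurable_fst.snd.prodMk measurable_snd)).sub (hF'.comp measurable_fst.snd))
          hcentered (sq_nonneg σ) (fun p => hvar p.2) hS (1 - β)
    _ ≤ _ := by
        have := integral_mono_ae ((memLp_two_iff_integrable_sq_norm hS.1).1 hS) hbound hbias
        rw [integral_add' (hint.const_mul β) (integrable_const _), integral_const_mul,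
          integral_const, probReal_univ, one_smul] at this
        linarith

theorem muon_momentum_error_recursion_general
    (m n : ℕ)
    (f' : EuclideanSpace ℝ (Fin m × Fin n) → EuclideanSpace ℝ (Fin m × Fin n))
    (L σ : ℝ)
    (hsmooth : ∀ Y₁ Y₂, ‖f' Y₂ - f' Y₁‖ ≤ L * ‖Y₂ - Y₁‖)
    {Z : Type*} [MeasurableSpace Z] (μ : Measure Z) [IsProbabilityMeasure μ]
    (G : EuclideanSpace ℝ (Fin m × Fin n) → Z → EuclideanSpace ℝ (Fin m × Fin n))
    (hGmeas : Measurable (Function.uncurry G))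
    (hunbiased : ∀ Y, ∫ z, G Y z ∂μ = f' Y)
    (hvar : ∀ Y, ∫ z, ‖G Y z - f' Y‖ ^ 2 ∂μ ≤ σ ^ 2)
    {Ω : Type*} [mΩ : MeasurableSpace Ω] (P : Measure Ω) [IsProbabilityMeasure P]
    (ξ : Ω → Z) (hξmeas : Measurable ξ) (hlaw : P.map ξ = μ)
    (𝓕 : MeasurableSpace Ω) (h𝓕 : 𝓕 ≤ mΩ)
    (X M O : Ω → EuclideanSpace ℝ (Fin m × Fin n))
    (hXmeas : Measurable[𝓕] X) (hMmeas : Measurable[𝓕] M) (hOmeas : Measurable[𝓕] O)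
    (hint : Integrable (fun ω => ‖M ω - f' (X ω)‖ ^ 2) P)
    (hOn : ∀ᵐ ω ∂P, ‖O ω‖ ^ 2 ≤ (n : ℝ))
    (η : ℝ) (β : ℝ) (hβ0 : 0 < β) (hβ1 : β < 1)
    (hindep : Indep (MeasurableSpace.comap ξ inferInstance) 𝓕 P) :
    ∫ ω, ‖(β • M ω + (1 - β) • G (X ω - η • O ω) (ξ ω))
            - f' (X ω - η • O ω)‖ ^ 2 ∂P ≤
      β * ∫ ω, ‖M ω - f' (X ω)‖ ^ 2 ∂P
        + (β ^ 2 / (1 - β)) * L ^ 2 * η ^ 2 * n + (1 - β) ^ 2 * σ ^ 2 := by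
  have hY : Measurable[𝓕] fun ω => (M ω, X ω - η • O ω) :=
    hMmeas.prodMk (hXmeas.sub (hOmeas.const_smul η))
  -- `𝓕` is a local instance as well, so the ambient σ-algebra has to be named.
  exact integral_norm_momentum_sub_sq_le (mΩ := mΩ) hsmooth hGmeas hunbiased hvar hξmeas hlaw
    (hY.mono h𝓕 le_rfl)
    ((IndepFun_iff_Indep _ _ _).2 (indep_of_indep_of_le_left hindep.symm hY.comap_le)) hint hOn
    hβ0.le hβ1

/-- **One-step momentum error recursion for the EMA gradient estimator** (Lemma 2):
for `X' = X - η O` with `‖O‖_F² ≤ n` a.s. and `M' = β M + (1-β) G(X', ξ)` with a fresh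
sample `ξ` independent of the history,
`E‖M' - ∇f(X')‖² ≤ β E‖M - ∇f(X)‖² + (β²/(1-β)) L² η² n + (1-β)² σ²`. -/
theorem muon_momentum_error_recursion
    (m n : ℕ) (hmn : n ≤ m) (hn : 1 ≤ n)
    (f : EuclideanSpace ℝ (Fin m × Fin n) → ℝ)
    (f' : EuclideanSpace ℝ (Fin m × Fin n) → EuclideanSpace ℝ (Fin m × Fin n))
    (L σ : ℝ) (hL : 0 < L) (hσ : 0 ≤ σ)
    (hgrad : ∀ Y, HasGradientAt f (f' Y) Y)
    (hsmooth : ∀ Y₁ Y₂, ‖f' Y₂ - f' Y₁‖ ≤ L * ‖Y₂ - Y₁‖)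
    {Z : Type*} [MeasurableSpace Z] (μ : Measure Z) [IsProbabilityMeasure μ]
    (G : EuclideanSpace ℝ (Fin m × Fin n) → Z → EuclideanSpace ℝ (Fin m × Fin n))
    (hGmeas : Measurable (Function.uncurry G))
    (hunbiased : ∀ Y, ∫ z, G Y z ∂μ = f' Y)
    (hvar : ∀ Y, ∫ z, ‖G Y z - f' Y‖ ^ 2 ∂μ ≤ σ ^ 2)
    {Ω : Type*} [mΩ : MeasurableSpace Ω] (P : Measure Ω) [IsProbabilityMeasure P]
    (ξ : Ω → Z) (hξmeas : Measurable ξ) (hlaw : P.map ξ = μ)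
    (𝓕 : MeasurableSpace Ω) (h𝓕 : 𝓕 ≤ mΩ)
    (X M O : Ω → EuclideanSpace ℝ (Fin m × Fin n))
    (hXmeas : Measurable[𝓕] X) (hMmeas : Measurable[𝓕] M) (hOmeas : Measurable[𝓕] O)
    (hint : Integrable (fun ω => ‖M ω - f' (X ω)‖ ^ 2) P)
    (hOn : ∀ᵐ ω ∂P, ‖O ω‖ ^ 2 ≤ (n : ℝ))
    (η : ℝ) (hη : 0 < η) (β : ℝ) (hβ0 : 0 < β) (hβ1 : β < 1)
    (hindep : Indep (MeasurableSpace.comap ξ inferInstance) 𝓕 P) :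
    ∫ ω, ‖(β • M ω + (1 - β) • G (X ω - η • O ω) (ξ ω))
            - f' (X ω - η • O ω)‖ ^ 2 ∂P ≤
      β * ∫ ω, ‖M ω - f' (X ω)‖ ^ 2 ∂P
        + (β ^ 2 / (1 - β)) * L ^ 2 * η ^ 2 * n + (1 - β) ^ 2 * σ ^ 2 :=
  muon_momentum_error_recursion_general m n f' L σ hsmooth μ G hGmeas hunbiased hvar (mΩ := mΩ) P ξ
    hξmeas hlaw 𝓕 h𝓕 X M O hXmeas hMmeas hOmeas hint hOn η β hβ0 hβ1 hindep
end

section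
/- Let {A_t}_{t≥1} and {B_t}_{t≥1} be nonnegative real sequences, let p ∈ (0,1], and set ε_t = t^{−p}. Assume A_{t+1} ≤ (1 − ε_{t+1}) A_t + B_{t+1} for all t ≥ 1. Then for every t ≥ 1, √(ε_t) · A_t ≤ 4 ( A_t/√(ε_t) − A_{t+1}/√(ε_{t+1}) + B_{t+1}/√(ε_{t+1}) ). -/
/-- Key scalar inequality: for `x ≥ 1` with `x = 1` or `x ≥ 2`, and `0 < q ≤ 1/2`,
`x^(-q) ≤ 4 (x^q - (x+1)^q + (x+1)^(-q))`. -/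
lemma sqrt_weighted_key (x : ℝ) (hx : 1 ≤ x) (hcase : x = 1 ∨ 2 ≤ x)
    (q : ℝ) (hq0 : 0 < q) (hq : q ≤ 1/2) :
    x ^ (-q) ≤ 4 * (x ^ q - (x+1) ^ q + (x+1) ^ (-q)) := by
  have hx0 : (0:ℝ) < x := lt_of_lt_of_le one_pos hx
  rcases hcase with rfl | h2
  · -- x = 1
    norm_num [Real.one_rpow]
    set u := (2:ℝ) ^ q with hu
    have hu1 : (1:ℝ) ≤ u := Real.one_le_rpow (by norm_num) hq0.le
    have hu2 : u ≤ Real.sqrt 2 := by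
      rw [Real.sqrt_eq_rpow]
      exact Real.rpow_le_rpow_of_exponent_le (by norm_num) hq
    have huinv : (2:ℝ) ^ (-q) = u⁻¹ := by rw [Real.rpow_neg (by norm_num), hu]
    rw [huinv]
    have hu0 : (0:ℝ) < u := lt_of_lt_of_le one_pos hu1
    have hsq : Real.sqrt 2 * Real.sqrt 2 = 2 := Real.mul_self_sqrt (by norm_num)
    have hsqle : Real.sqrt 2 ≤ 1.4143 := by
      nlinarith [Real.sqrt_nonneg 2]
    have hsqge : (1.414:ℝ) ≤ Real.sqrt 2 := by
      nlinarith [Real.sqrt_nonneg 2]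
    -- need: 1 ≤ 4 * (1 - u + u⁻¹), i.e. 4 u² - 3 u - 4 ≤ 0 for 1 ≤ u ≤ √2
    have hid : (4*(1-u+u⁻¹))*u = 4*u - 4*(u*u) + 4 := by
      field_simp
    have h : 1*u ≤ 4*u - 4*(u*u) + 4 := by
      nlinarith [mul_nonneg (sub_nonneg.2 hu2) (sub_nonneg.2 hu1)]
    exact le_of_mul_le_mul_right (hid ▸ h) hu0
  · -- x ≥ 2
    have hx10 : (0:ℝ) < x + 1 := by linarith
    have key1 : (x+1) ^ q ≤ x ^ q + (1/2) * x ^ (-q) := by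
      have hxq : (0:ℝ) < x ^ q := Real.rpow_pos_of_pos hx0 q
      have hb : (1 + 1/x) ^ q ≤ 1 + q * (1/x) :=
        rpow_one_add_le_one_add_mul_self
          (by have : (0:ℝ) ≤ 1/x := by positivity
              linarith) hq0.le (by linarith)
      have hsplit : (x+1) ^ q = x ^ q * (1 + 1/x) ^ q := by
        rw [← Real.mul_rpow hx0.le (by positivity)]
        field_simp
      have hmono : x ^ (q - 1) ≤ x ^ (-q) :=
        Real.rpow_le_rpow_of_exponent_le hx (by linarith)
      have hxq1 : x ^ q * (1/x) = x ^ (q-1) := by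
        rw [one_div, ← Real.rpow_neg_one x, ← Real.rpow_add hx0]
        ring_nf
      calc (x+1) ^ q = x ^ q * (1 + 1/x) ^ q := hsplit
        _ ≤ x ^ q * (1 + q * (1/x)) := by
            apply mul_le_mul_of_nonneg_left hb hxq.le
        _ = x ^ q + q * (x ^ q * (1/x)) := by ring
        _ = x ^ q + q * x ^ (q-1) := by rw [hxq1]
        _ ≤ x ^ q + (1/2) * x ^ (-q) := by
            have h1 : q * x ^ (q-1) ≤ (1/2) * x ^ (q-1) := by
              apply mul_le_mul_of_nonneg_right hq (Real.rpow_pos_of_pos hx0 _).le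
            have h2 : (1/2) * x ^ (q-1) ≤ (1/2) * x ^ (-q) := by linarith
            linarith
    have key2 : 3 * x ^ (-q) ≤ 4 * (x+1) ^ (-q) := by
      have hxq : (0:ℝ) < x ^ q := Real.rpow_pos_of_pos hx0 q
      have hx1q : (0:ℝ) < (x+1) ^ q := Real.rpow_pos_of_pos hx10 q
      have h32 : (x+1) ^ q ≤ (4/3) * x ^ q := by
        have hb : x + 1 ≤ (3/2) * x := by linarith
        have hc : (x+1) ^ q ≤ ((3/2) * x) ^ q :=
          Real.rpow_le_rpow hx10.le hb hq0.le
        have hd : ((3/2) * x) ^ q = (3/2:ℝ) ^ q * x ^ q :=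
          Real.mul_rpow (by norm_num) hx0.le
        have he : (3/2:ℝ) ^ q ≤ (3/2:ℝ) ^ ((1:ℝ)/2) :=
          Real.rpow_le_rpow_of_exponent_le (by norm_num) hq
        have hf : (3/2:ℝ) ^ ((1:ℝ)/2) ≤ 4/3 := by
          rw [← Real.sqrt_eq_rpow]
          rw [show (4:ℝ)/3 = Real.sqrt ((4/3)^2) from (Real.sqrt_sq (by norm_num)).symm]
          apply Real.sqrt_le_sqrt; norm_num
        calc (x+1) ^ q ≤ (3/2:ℝ) ^ q * x ^ q := hd ▸ hc
          _ ≤ (4/3) * x ^ q := by nlinarith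
      rw [Real.rpow_neg hx0.le, Real.rpow_neg hx10.le, ← div_eq_mul_inv,
        ← div_eq_mul_inv, div_le_div_iff₀ hxq hx1q]
      nlinarith
    linarith
set_option maxHeartbeats 1000000 in
/-- **Square-root–weighted telescoping lemma** (Lemma 4): if `A` and `B` are nonnegative
sequences with `A_{t+1} ≤ (1 - ε_{t+1}) A_t + B_{t+1}` where `ε_t = t^{-p}`, `p ∈ (0,1]`,
then `√(ε_t) A_t ≤ 4 (A_t/√(ε_t) - A_{t+1}/√(ε_{t+1}) + B_{t+1}/√(ε_{t+1}))`. -/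
theorem sqrt_weighted_telescoping
    (A B : ℕ → ℝ) (hA : ∀ t, 0 ≤ A t) (hB : ∀ t, 0 ≤ B t)
    (p : ℝ) (hp0 : 0 < p) (hp1 : p ≤ 1)
    (hrec : ∀ t : ℕ, 1 ≤ t →
      A (t + 1) ≤ (1 - ((t : ℝ) + 1) ^ (-p)) * A t + B (t + 1)) :
    ∀ t : ℕ, 1 ≤ t →
      Real.sqrt ((t : ℝ) ^ (-p)) * A t ≤
        4 * (A t / Real.sqrt ((t : ℝ) ^ (-p))
              - A (t + 1) / Real.sqrt (((t : ℝ) + 1) ^ (-p))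
              + B (t + 1) / Real.sqrt (((t : ℝ) + 1) ^ (-p))) := by
  intro t ht
  set x : ℝ := (t : ℝ) with hxdef
  have hx : 1 ≤ x := by rw [hxdef]; exact_mod_cast ht
  have hx0 : (0:ℝ) < x := lt_of_lt_of_le one_pos hx
  have hx10 : (0:ℝ) < x + 1 := by linarith
  set q : ℝ := p / 2 with hqdef
  have hq0 : 0 < q := by positivity
  have hq : q ≤ 1/2 := by simp only [hqdef]; linarith
  -- rewrite the square roots as rpow
  have hs1 : Real.sqrt (x ^ (-p)) = x ^ (-q) := by
    rw [Real.sqrt_eq_rpow, ← Real.rpow_mul hx0.le]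
    norm_num [hqdef]; ring_nf
  have hs2 : Real.sqrt ((x+1) ^ (-p)) = (x+1) ^ (-q) := by
    rw [Real.sqrt_eq_rpow, ← Real.rpow_mul hx10.le]
    norm_num [hqdef]; ring_nf
  rw [hs1, hs2]
  have hpos1 : (0:ℝ) < x ^ (-q) := Real.rpow_pos_of_pos hx0 _
  have hpos2 : (0:ℝ) < (x+1) ^ (-q) := Real.rpow_pos_of_pos hx10 _
  have hd1 : A t / x ^ (-q) = A t * x ^ q := by
    rw [Real.rpow_neg hx0.le, div_eq_mul_inv, inv_inv]
  have hd2 : A (t+1) / (x+1) ^ (-q) = A (t+1) * (x+1) ^ q := by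
    rw [Real.rpow_neg hx10.le, div_eq_mul_inv, inv_inv]
  have hd3 : B (t+1) / (x+1) ^ (-q) = B (t+1) * (x+1) ^ q := by
    rw [Real.rpow_neg hx10.le, div_eq_mul_inv, inv_inv]
  rw [hd1, hd2, hd3]
  -- the recursion multiplied by (x+1)^q
  have hrec' := hrec t ht
  have hEps : ((x+1) ^ (-p)) * (x+1) ^ q = (x+1) ^ (-q) := by
    rw [← Real.rpow_add hx10]
    congr 1
    simp only [hqdef]; ring
  have hstep : A (t+1) * (x+1) ^ q ≤
      A t * (x+1) ^ q - A t * (x+1) ^ (-q) + B (t+1) * (x+1) ^ q := by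
    have h := mul_le_mul_of_nonneg_right hrec' (Real.rpow_pos_of_pos hx10 q).le
    calc A (t+1) * (x+1) ^ q
        ≤ ((1 - (x+1) ^ (-p)) * A t + B (t+1)) * (x+1) ^ q := h
      _ = A t * (x+1) ^ q - A t * ((x+1) ^ (-p) * (x+1) ^ q)
            + B (t+1) * (x+1) ^ q := by ring
      _ = A t * (x+1) ^ q - A t * (x+1) ^ (-q) + B (t+1) * (x+1) ^ q := by rw [hEps]
  have hcase : x = 1 ∨ 2 ≤ x := by
    rcases Nat.lt_or_ge t 2 with h | h
    · left
      interval_cases t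
      · simp [hxdef]
    · right; rw [hxdef]; exact_mod_cast h
  have hkey := sqrt_weighted_key x hx hcase q hq0 hq
  have hAx := hA t
  nlinarith [mul_le_mul_of_nonneg_left hkey hAx]
end

section
/- For every real number t ≥ 1 and every q ∈ (0, 1/2], one has (1/4)·t^{−q} − t^{q} + (t+1)^{q} − (t+1)^{−q} ≤ 0. -/
/-- The key real-power estimate behind the weighted telescoping lemma: for every real
`t ≥ 1` and every `q ∈ (0, 1/2]`,
`(1/4) t^{-q} - t^{q} + (t+1)^{q} - (t+1)^{-q} ≤ 0`. -/
theorem rpow_key_estimate (t q : ℝ) (ht : 1 ≤ t) (hq0 : 0 < q) (hq : q ≤ 1 / 2) :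
    (1 / 4) * t ^ (-q) - t ^ q + (t + 1) ^ q - (t + 1) ^ (-q) ≤ 0 := by
  have ht0 : (0:ℝ) < t := by linarith
  have hs0 : (0:ℝ) < t + 1 := by linarith
  set a := t ^ q with ha
  set b := (t + 1) ^ q with hb
  have ha0 : (0:ℝ) < a := Real.rpow_pos_of_pos ht0 q
  have hb0 : (0:ℝ) < b := Real.rpow_pos_of_pos hs0 q
  have hta : t ^ (-q) = a⁻¹ := Real.rpow_neg ht0.le q
  have htb : (t + 1) ^ (-q) = b⁻¹ := Real.rpow_neg hs0.le q
  -- a ^ 2 ≤ t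
  have ha2eq : a ^ 2 = t ^ (q * 2) := by
    rw [ha, ← Real.rpow_natCast (t ^ q) 2, ← Real.rpow_mul ht0.le]
    norm_num
  have ha2 : a ^ 2 ≤ t := by
    rw [ha2eq]
    calc t ^ (q * 2) ≤ t ^ (1:ℝ) :=
          Real.rpow_le_rpow_of_exponent_le ht (by linarith)
      _ = t := Real.rpow_one t
  -- a ≤ b
  have hab : a ≤ b := Real.rpow_le_rpow ht0.le (by linarith) hq0.le
  -- t * b^2 ≤ (t+1) * a^2
  have hw : t * b ^ 2 ≤ (t + 1) * a ^ 2 := by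
    have h1 : (1:ℝ) ≤ (t + 1) / t := by
      rw [le_div_iff₀ ht0]; linarith
    have h2 : ((t + 1) / t) ^ (q * 2) ≤ ((t + 1) / t) ^ (1:ℝ) :=
      Real.rpow_le_rpow_of_exponent_le h1 (by linarith)
    rw [Real.rpow_one, Real.div_rpow hs0.le ht0.le] at h2
    have hb2eq : b ^ 2 = (t + 1) ^ (q * 2) := by
      rw [hb, ← Real.rpow_natCast ((t + 1) ^ q) 2, ← Real.rpow_mul hs0.le]
      norm_num
    have hta2 : (0:ℝ) < t ^ (q * 2) := Real.rpow_pos_of_pos ht0 _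
    rw [div_le_div_iff₀ hta2 ht0] at h2
    rw [hb2eq, ha2eq]
    nlinarith [h2]
  -- b^2 ≤ 2 * a^2
  have hb2a : b ^ 2 ≤ 2 * a ^ 2 := by nlinarith
  -- b ≤ (3/2) * a
  have hba : b ≤ 3 / 2 * a := by nlinarith
  -- key polynomial inequality
  have key : b / 4 - a ^ 2 * b + a * b ^ 2 - a ≤ 0 := by
    have hpos : 0 < a - b / 4 := by nlinarith
    have hab0 : (0:ℝ) < a * b := mul_pos ha0 hb0
    have habp : (0:ℝ) < a + b := by linarith
    have H1 : t * (a * b) * (b ^ 2 - a ^ 2) ≤ a ^ 2 * (a * b) := by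
      nlinarith [mul_le_mul_of_nonneg_left hw hab0.le]
    have H2 : (a - b / 4) * (a ^ 2 * (a + b)) ≤ (a - b / 4) * (t * (a + b)) :=
      mul_le_mul_of_nonneg_left (mul_le_mul_of_nonneg_right ha2 habp.le) hpos.le
    have H4 : a ^ 2 * (a * b) ≤ (a - b / 4) * (a ^ 2 * (a + b)) := by
      nlinarith [mul_le_mul_of_nonneg_left hba (mul_nonneg (mul_nonneg ha0.le ha0.le) ha0.le),
        mul_le_mul_of_nonneg_left hb2a (mul_nonneg ha0.le ha0.le)]
    have htp : (0:ℝ) < t * (a + b) := mul_pos ht0 habp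
    have hid : (b / 4 - a ^ 2 * b + a * b ^ 2 - a) * (t * (a + b)) =
        t * (a * b) * (b ^ 2 - a ^ 2) - (a - b / 4) * (t * (a + b)) := by ring
    have H5 : (b / 4 - a ^ 2 * b + a * b ^ 2 - a) * (t * (a + b)) ≤ 0 * (t * (a + b)) := by
      rw [hid, zero_mul]; linarith
    exact le_of_mul_le_mul_right H5 htp
  rw [hta, htb]
  have hab0 : (0:ℝ) < a * b := mul_pos ha0 hb0
  have hmul : (1 / 4 * a⁻¹ - a + b - b⁻¹) * (a * b) =
      b / 4 - a ^ 2 * b + a * b ^ 2 - a := by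
    field_simp
  have : (1 / 4 * a⁻¹ - a + b - b⁻¹) * (a * b) ≤ 0 * (a * b) := by
    rw [hmul, zero_mul]; exact key
  exact le_of_mul_le_mul_right this hab0
end

section
/- Let {a_t}_{t≥1} be a nonnegative real sequence and K ≥ 0, and set η_t = t^{−2/3}. Assume a_{t+1} ≤ (1 − η_{t+1}) a_t + 2 η_{t+1}² K for all t ≥ 1. Then for every integer T ≥ 1, (1/T) ∑_{t=1}^T a_t ≤ (4 a_1 + 8 K (1 + ln T)) / T^{2/3}. -/
/-!
By induction, `a_t ≤ (a_1 + 4K) t^{-2/3}`: since `2K ≤ (a_1 + 4K)/2`, the induction step only needs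
`(1 - η_{t+1}) η_t + η_{t+1}² / 2 ≤ η_{t+1}`, which for `s = t^{1/3}`, `r = (t+1)^{1/3}` is the
polynomial inequality `s² ≤ 2r²(s² + 1 - r²)` under `r³ = s³ + 1`. Summing, with the telescoping
bound `t^{-2/3} ≤ 3 (t^{1/3} - (t-1)^{1/3})`, gives `∑_{t ≤ T} a_t ≤ 3 (a_1 + 4K) T^{1/3}`, and
`3 (a_1 + 4K) ≤ 4 a_1 + 8K (1 + ln T)` as soon as `ln T ≥ 1/2`, i.e. `T ≥ 2`.
-/

open Real Finset

theorem le_mul_of_recursion {a η : ℕ → ℝ} {K C : ℝ} (hK : 0 ≤ K) (hKC : 4 * K ≤ C)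
    (hη : ∀ t, 1 ≤ t → η (t + 1) ≤ 1)
    (hstep : ∀ t, 1 ≤ t → (1 - η (t + 1)) * η t + η (t + 1) ^ 2 / 2 ≤ η (t + 1))
    (h1 : a 1 ≤ C * η 1)
    (hrec : ∀ t, 1 ≤ t → a (t + 1) ≤ (1 - η (t + 1)) * a t + 2 * η (t + 1) ^ 2 * K) :
    ∀ t, 1 ≤ t → a t ≤ C * η t := by
  intro t ht
  induction t, ht using Nat.le_induction with
  | base => exact h1
  | succ t ht ih =>
    have hC : 0 ≤ C := by linarith
    have hη' : 0 ≤ 1 - η (t + 1) := by linarith [hη t ht]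
    calc a (t + 1) ≤ (1 - η (t + 1)) * a t + 2 * η (t + 1) ^ 2 * K := hrec t ht
      _ ≤ (1 - η (t + 1)) * (C * η t) + 2 * η (t + 1) ^ 2 * K := by gcongr
      _ ≤ C * ((1 - η (t + 1)) * η t + η (t + 1) ^ 2 / 2) := by
        nlinarith [sq_nonneg (η (t + 1))]
      _ ≤ C * η (t + 1) := mul_le_mul_of_nonneg_left (hstep t ht) hC

theorem inv_sq_step_of_pow_three_eq {s r : ℝ} (hs : 1 ≤ s) (hsr : s ≤ r)
    (h : r ^ 3 = s ^ 3 + 1) :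
    (1 - (r ^ 2)⁻¹) * (s ^ 2)⁻¹ + ((r ^ 2)⁻¹) ^ 2 / 2 ≤ (r ^ 2)⁻¹ := by
  have hs0 : 0 < s := by linarith
  have hr0 : 0 < r := by linarith
  have key : s ^ 2 ≤ 2 * r ^ 2 * (s ^ 2 + 1 - r ^ 2) := by
    nlinarith [mul_nonneg (sub_nonneg.2 hs) (sub_nonneg.2 hsr), sq_nonneg (r - s - 1 / 3)]
  have e : (r ^ 2)⁻¹ - ((1 - (r ^ 2)⁻¹) * (s ^ 2)⁻¹ + ((r ^ 2)⁻¹) ^ 2 / 2)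
      = (2 * r ^ 2 * (s ^ 2 + 1 - r ^ 2) - s ^ 2) / (2 * r ^ 4 * s ^ 2) := by
    field_simp
    ring
  rw [← sub_nonneg, e]
  apply div_nonneg <;> [linarith; positivity]

theorem inv_sq_le_three_mul_sub_of_pow_three_eq {z w : ℝ} (hz : 0 ≤ z) (hzw : z ≤ w)
    (h : w ^ 3 = z ^ 3 + 1) : (w ^ 2)⁻¹ ≤ 3 * (w - z) := by
  have hw : 0 < w := (Odd.pow_pos_iff (by decide : Odd 3)).1 (by rw [h]; positivity)
  rw [inv_le_iff_one_le_mul₀ (by positivity)]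
  nlinarith [mul_nonneg (sub_nonneg.2 hzw) (add_nonneg hw.le hz),
    mul_nonneg (sub_nonneg.2 hzw) hw.le]

theorem rpow_one_third_pow_three {x : ℝ} (hx : 0 ≤ x) : (x ^ (1 / 3 : ℝ)) ^ 3 = x := by
  rw [← rpow_natCast, ← rpow_mul hx]
  norm_num

theorem rpow_neg_two_thirds_eq {x : ℝ} (hx : 0 ≤ x) :
    x ^ (-(2 : ℝ) / 3) = ((x ^ (1 / 3 : ℝ)) ^ 2)⁻¹ := by
  rw [← rpow_natCast, ← rpow_mul hx, neg_div, rpow_neg hx]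
  norm_num

theorem rpow_neg_two_thirds_step {t : ℝ} (ht : 1 ≤ t) :
    (1 - (t + 1) ^ (-(2 : ℝ) / 3)) * t ^ (-(2 : ℝ) / 3) + ((t + 1) ^ (-(2 : ℝ) / 3)) ^ 2 / 2
      ≤ (t + 1) ^ (-(2 : ℝ) / 3) := by
  rw [rpow_neg_two_thirds_eq (by linarith), rpow_neg_two_thirds_eq (by linarith)]
  apply inv_sq_step_of_pow_three_eq
  · exact one_le_rpow ht (by norm_num)
  · exact rpow_le_rpow (by linarith) (by linarith) (by norm_num)
  · rw [rpow_one_third_pow_three (by linarith), rpow_one_third_pow_three (by linarith)]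

theorem rpow_neg_two_thirds_le_sub {x : ℝ} (hx : 0 ≤ x) :
    (x + 1) ^ (-(2 : ℝ) / 3) ≤ 3 * ((x + 1) ^ (1 / 3 : ℝ) - x ^ (1 / 3 : ℝ)) := by
  rw [rpow_neg_two_thirds_eq (by linarith)]
  apply inv_sq_le_three_mul_sub_of_pow_three_eq (rpow_nonneg hx _)
  · exact rpow_le_rpow hx (by linarith) (by norm_num)
  · rw [rpow_one_third_pow_three (by linarith), rpow_one_third_pow_three hx]

theorem sum_Icc_rpow_neg_two_thirds_le (T : ℕ) :
    ∑ t ∈ Icc 1 T, (t : ℝ) ^ (-(2 : ℝ) / 3) ≤ 3 * (T : ℝ) ^ (1 / 3 : ℝ) := by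
  induction T with
  | zero => simp
  | succ T ih =>
    rw [sum_Icc_succ_top (by omega), Nat.cast_succ]
    linarith [rpow_neg_two_thirds_le_sub (Nat.cast_nonneg (α := ℝ) T)]

section Recursion

variable {a : ℕ → ℝ} {K : ℝ}

theorem le_mul_rpow_of_recursion (ha1 : 0 ≤ a 1) (hK : 0 ≤ K)
    (hrec : ∀ t : ℕ, 1 ≤ t →
      a (t + 1) ≤ (1 - ((t : ℝ) + 1) ^ (-(2 : ℝ) / 3)) * a t
        + 2 * (((t : ℝ) + 1) ^ (-(2 : ℝ) / 3)) ^ 2 * K) :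
    ∀ t, 1 ≤ t → a t ≤ (a 1 + 4 * K) * (t : ℝ) ^ (-(2 : ℝ) / 3) := by
  refine le_mul_of_recursion hK (by linarith) (fun t _ => ?_) (fun t ht => ?_) ?_
    (by exact_mod_cast hrec)
  · push_cast
    exact rpow_le_one_of_one_le_of_nonpos (by linarith) (by norm_num)
  · push_cast
    exact rpow_neg_two_thirds_step (by exact_mod_cast ht)
  · simp only [Nat.cast_one, one_rpow, mul_one]
    linarith

theorem sum_Icc_le_of_recursion (ha1 : 0 ≤ a 1) (hK : 0 ≤ K)
    (hrec : ∀ t : ℕ, 1 ≤ t →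
      a (t + 1) ≤ (1 - ((t : ℝ) + 1) ^ (-(2 : ℝ) / 3)) * a t
        + 2 * (((t : ℝ) + 1) ^ (-(2 : ℝ) / 3)) ^ 2 * K) (T : ℕ) :
    ∑ t ∈ Icc 1 T, a t ≤ 3 * (a 1 + 4 * K) * (T : ℝ) ^ (1 / 3 : ℝ) := by
  calc ∑ t ∈ Icc 1 T, a t ≤ ∑ t ∈ Icc 1 T, (a 1 + 4 * K) * (t : ℝ) ^ (-(2 : ℝ) / 3) :=
        sum_le_sum fun t ht => le_mul_rpow_of_recursion ha1 hK hrec t (mem_Icc.1 ht).1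
    _ ≤ (a 1 + 4 * K) * (3 * (T : ℝ) ^ (1 / 3 : ℝ)) := by
        rw [← mul_sum]
        exact mul_le_mul_of_nonneg_left (sum_Icc_rpow_neg_two_thirds_le T) (by linarith)
    _ = 3 * (a 1 + 4 * K) * (T : ℝ) ^ (1 / 3 : ℝ) := by ring

end Recursion

/-- **Averaged recursion bound for `η_t = t^{-2/3}`** (Lemma 6): if `a` is a nonnegative
sequence with `a_{t+1} ≤ (1 - η_{t+1}) a_t + 2 η_{t+1}² K` for `η_t = t^{-2/3}` and
`K ≥ 0`, then `(1/T) ∑_{t=1}^T a_t ≤ (4 a_1 + 8 K (1 + ln T)) / T^{2/3}`. -/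
theorem averaged_recursion_bound
    (a : ℕ → ℝ) (ha : ∀ t, 0 ≤ a t) (K : ℝ) (hK : 0 ≤ K)
    (hrec : ∀ t : ℕ, 1 ≤ t →
      a (t + 1) ≤ (1 - ((t : ℝ) + 1) ^ (-(2 : ℝ)/3)) * a t
        + 2 * (((t : ℝ) + 1) ^ (-(2 : ℝ)/3)) ^ 2 * K) :
    ∀ T : ℕ, 1 ≤ T →
      (1 / (T : ℝ)) * ∑ t ∈ Finset.Icc 1 T, a t ≤
        (4 * a 1 + 8 * K * (1 + Real.log T)) / (T : ℝ) ^ ((2 : ℝ)/3) := by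
  intro T hT
  rcases hT.eq_or_lt with rfl | hT2
  · simp only [Nat.cast_one, div_self one_ne_zero, Icc_self, sum_singleton, one_mul, log_one,
      add_zero, mul_one, one_rpow, div_one]
    linarith [ha 1]
  have hT0 : (0 : ℝ) < T := by positivity
  have hsplit : (T : ℝ) ^ (1 / 3 : ℝ) * T ^ ((2 : ℝ) / 3) = T := by
    rw [← rpow_add hT0]; norm_num
  have hlog : 1 / 2 ≤ log T := by
    have : log 2 ≤ log T := log_le_log (by norm_num) (by exact_mod_cast hT2)
    linarith [log_two_gt_d9]
  calc (1 / (T : ℝ)) * ∑ t ∈ Icc 1 T, a t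
      ≤ (1 / (T : ℝ)) * (3 * (a 1 + 4 * K) * (T : ℝ) ^ (1 / 3 : ℝ)) := by
        gcongr
        exact sum_Icc_le_of_recursion (ha 1) hK hrec T
    _ = 3 * (a 1 + 4 * K) / (T : ℝ) ^ ((2 : ℝ) / 3) := by
        field_simp
        linear_combination (a 1 + 4 * K) * hsplit
    _ ≤ (4 * a 1 + 8 * K * (1 + log T)) / (T : ℝ) ^ ((2 : ℝ) / 3) := by
        gcongr
        nlinarith [ha 1]
end

section
/- Let {a_t}_{t≥1} be a nonnegative real sequence and K ≥ 0, and set α_t = t^{−1/2}. Assume a_{t+1} ≤ (1 − α_{t+1}) a_t + α_{t+1}² K for all t ≥ 1. Then for every integer T ≥ 1, ∑_{t=1}^T α_t a_t ≤ 2 a_1 + 2 K (ln T + 1). -/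
/-- **Weighted-sum recursion bound for `α_t = t^{-1/2}`**: if `a` is a nonnegative
sequence with `a_{t+1} ≤ (1 - α_{t+1}) a_t + α_{t+1}² K` for `α_t = t^{-1/2}` and
`K ≥ 0`, then `∑_{t=1}^T α_t a_t ≤ 2 a_1 + 2 K (ln T + 1)`. -/
theorem weighted_sum_recursion_bound
    (a : ℕ → ℝ) (ha : ∀ t, 0 ≤ a t) (K : ℝ) (hK : 0 ≤ K)
    (hrec : ∀ t : ℕ, 1 ≤ t →
      a (t + 1) ≤ (1 - ((t : ℝ) + 1) ^ (-(1 : ℝ)/2)) * a t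
        + (((t : ℝ) + 1) ^ (-(1 : ℝ)/2)) ^ 2 * K) :
    ∀ T : ℕ, 1 ≤ T →
      ∑ t ∈ Finset.Icc 1 T, ((t : ℝ) ^ (-(1 : ℝ)/2)) * a t ≤
        2 * a 1 + 2 * K * (Real.log T + 1) := by
  intro T hT
  -- pointwise bound
  have key : ∀ t : ℕ, 1 ≤ t →
      ((t : ℝ) ^ (-(1 : ℝ)/2)) * a t ≤ 2 * (a t - a (t + 1)) + 2 * K * (t : ℝ)⁻¹ := by
    intro t ht
    have ht' : (0 : ℝ) < t := by exact_mod_cast ht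
    have ht1 : (0 : ℝ) < (t : ℝ) + 1 := by linarith
    -- square of α_{t+1}
    have hsq : (((t : ℝ) + 1) ^ (-(1 : ℝ)/2)) ^ 2 = ((t : ℝ) + 1)⁻¹ := by
      rw [← Real.rpow_natCast (((t : ℝ) + 1) ^ (-(1 : ℝ)/2)) 2,
        ← Real.rpow_mul ht1.le]
      norm_num
      exact Real.rpow_neg_one _
    have h1 : ((t : ℝ) + 1) ^ (-(1 : ℝ)/2) * a t ≤ a t - a (t + 1) + K * ((t : ℝ) + 1)⁻¹ := by
      have := hrec t ht
      rw [hsq] at this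
      nlinarith [this]
    -- α_t ≤ 2 α_{t+1}
    have hA : (0 : ℝ) < (t : ℝ) ^ ((1 : ℝ)/2) := Real.rpow_pos_of_pos ht' _
    have hB : (0 : ℝ) < ((t : ℝ) + 1) ^ ((1 : ℝ)/2) := Real.rpow_pos_of_pos ht1 _
    have hBA : ((t : ℝ) + 1) ^ ((1 : ℝ)/2) ≤ 2 * (t : ℝ) ^ ((1 : ℝ)/2) := by
      have h4 : ((t : ℝ) + 1) ^ ((1 : ℝ)/2) ≤ (4 * (t : ℝ)) ^ ((1 : ℝ)/2) :=
        Real.rpow_le_rpow ht1.le (by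
          have ht'' : (1:ℝ) ≤ (t:ℝ) := by exact_mod_cast ht
          linarith) (by norm_num)
      have h5 : (4 * (t : ℝ)) ^ ((1 : ℝ)/2) = 2 * (t : ℝ) ^ ((1 : ℝ)/2) := by
        rw [Real.mul_rpow (by norm_num) ht'.le]
        congr 1
        rw [show (4 : ℝ) = (2 : ℝ) ^ (2 : ℝ) by
          rw [show (2:ℝ) = ((2:ℕ):ℝ) by norm_num, Real.rpow_natCast]; norm_num,
          ← Real.rpow_mul (by norm_num)]
        norm_num
      linarith
    have h2 : (t : ℝ) ^ (-(1 : ℝ)/2) ≤ 2 * ((t : ℝ) + 1) ^ (-(1 : ℝ)/2) := by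
      rw [show -(1 : ℝ)/2 = -((1:ℝ)/2) by ring, Real.rpow_neg ht'.le,
        Real.rpow_neg ht1.le]
      rw [inv_eq_one_div, show (2:ℝ) * (((t : ℝ) + 1) ^ ((1 : ℝ)/2))⁻¹
        = 2 / ((t : ℝ) + 1) ^ ((1 : ℝ)/2) by ring, div_le_div_iff₀ hA hB]
      linarith
    have h3 : (t : ℝ) ^ (-(1 : ℝ)/2) * a t ≤ 2 * (((t : ℝ) + 1) ^ (-(1 : ℝ)/2) * a t) := by
      have := mul_le_mul_of_nonneg_right h2 (ha t)
      linarith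
    have h6 : K * ((t : ℝ) + 1)⁻¹ ≤ K * (t : ℝ)⁻¹ := by
      apply mul_le_mul_of_nonneg_left _ hK
      exact inv_anti₀ ht' (by linarith)
    linarith
  -- sum the pointwise bound
  have hsum : ∑ t ∈ Finset.Icc 1 T, ((t : ℝ) ^ (-(1 : ℝ)/2)) * a t ≤
      ∑ t ∈ Finset.Icc 1 T, (2 * (a t - a (t + 1)) + 2 * K * (t : ℝ)⁻¹) := by
    apply Finset.sum_le_sum
    intro t htm
    exact key t (Finset.mem_Icc.mp htm).1
  rw [Finset.sum_add_distrib] at hsum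
  -- telescoping
  have htel0 : ∀ n : ℕ, ∑ i ∈ Finset.Icc 1 n, (a i - a (i + 1)) = a 1 - a (n + 1) := by
    intro n
    induction n with
    | zero => simp
    | succ n ih =>
        rw [Finset.sum_Icc_succ_top (Nat.le_add_left 1 n), ih]
        ring
  have htel : ∑ t ∈ Finset.Icc 1 T, (2 * (a t - a (t + 1))) = 2 * (a 1 - a (T + 1)) := by
    rw [← Finset.mul_sum, htel0]
  -- harmonic bound
  have hharm : ∑ t ∈ Finset.Icc 1 T, (t : ℝ)⁻¹ ≤ Real.log T + 1 := by
    have h := harmonic_le_one_add_log T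
    rw [harmonic_eq_sum_Icc] at h
    push_cast at h
    linarith
  have hharm2 : ∑ t ∈ Finset.Icc 1 T, (2 * K * (t : ℝ)⁻¹) ≤ 2 * K * (Real.log T + 1) := by
    rw [← Finset.mul_sum]
    apply mul_le_mul_of_nonneg_left hharm (by linarith)
  have haT := ha (T + 1)
  calc ∑ t ∈ Finset.Icc 1 T, ((t : ℝ) ^ (-(1 : ℝ)/2)) * a t
      ≤ ∑ t ∈ Finset.Icc 1 T, (2 * (a t - a (t + 1)))
        + ∑ t ∈ Finset.Icc 1 T, (2 * K * (t : ℝ)⁻¹) := hsum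
    _ ≤ 2 * (a 1 - a (T + 1)) + 2 * K * (Real.log T + 1) := by
        rw [htel]; linarith
    _ ≤ 2 * a 1 + 2 * K * (Real.log T + 1) := by linarith
end

section
/- Let {Γ_t}_{t≥1} be a nonnegative real sequence whose partial sums D_T = ∑_{t=1}^T Γ_t satisfy D_T ≤ A₁ ln T + A₂ for all T ≥ 1, for some positive constants A₁, A₂. Let p ∈ (0,1) and define f(t) = t^{1−p} / ln t. Then for every integer T₀ with T₀ > e^{1/(1−p)} and every integer T > T₀, ∑_{t=T₀}^{T−1} Γ_t f(t) ≤ (A₁ + A₂) (T−1)^{1−p}. -/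
/-!
On `[T₀, T - 1]` the weight `f(t) = t^{1-p} / ln t` is increasing, because `T₀ > e^{1/(1-p)}`,
so every weight is at most `f(T - 1)`. The sum is then at most
`D_{T-1} f(T - 1) ≤ (A₁ ln (T-1) + A₂) (T-1)^{1-p} / ln (T-1)`, and `ln (T - 1) ≥ 1` absorbs the
division on the `A₂` term.
-/

open Real Finset

lemma exp_mul_div_self_le {c a b : ℝ} (hc : 0 < c) (ha : 1 ≤ c * a) (hab : a ≤ b) :
    exp (c * a) / a ≤ exp (c * b) / b := by
  have ha0 : 0 < a := pos_of_mul_pos_right (one_pos.trans_le ha) hc.le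
  have hb0 : 0 < b := ha0.trans_le hab
  have hratio : b ≤ a * exp (c * (b - a)) :=
    calc b = a * (1 + (b - a) / a) := by field_simp; ring
      _ ≤ a * (1 + c * (b - a)) := by
        gcongr
        rw [div_le_iff₀ ha0]
        nlinarith
      _ ≤ a * exp (c * (b - a)) := by gcongr; linarith [add_one_le_exp (c * (b - a))]
  rw [div_le_div_iff₀ ha0 hb0]
  calc exp (c * a) * b ≤ exp (c * a) * (a * exp (c * (b - a))) := by gcongr
    _ = exp (c * b) * a := by rw [← mul_left_comm, ← exp_add]; ring_nf

lemma rpow_div_log_le_rpow_div_log {c x y : ℝ} (hc : 0 < c) (hx : exp (1 / c) ≤ x)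
    (hxy : x ≤ y) : x ^ c / log x ≤ y ^ c / log y := by
  have hx0 : 0 < x := (exp_pos _).trans_le hx
  have hy0 : 0 < y := hx0.trans_le hxy
  have hlog : 1 ≤ c * log x := by
    rw [← div_le_iff₀' hc]
    exact (le_log_iff_exp_le hx0).2 hx
  rw [rpow_def_of_pos hx0, rpow_def_of_pos hy0, mul_comm (log x), mul_comm (log y)]
  exact exp_mul_div_self_le hc hlog (log_le_log hx0 hxy)

lemma mul_add_mul_div_le {a₁ a₂ L X : ℝ} (ha₂ : 0 ≤ a₂) (hL : 1 ≤ L) (hX : 0 ≤ X) :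
    (a₁ * L + a₂) * (X / L) ≤ (a₁ + a₂) * X := by
  have hL0 : 0 < L := one_pos.trans_le hL
  have : a₂ / L ≤ a₂ := div_le_self ha₂ hL
  calc (a₁ * L + a₂) * (X / L) = (a₁ + a₂ / L) * X := by field_simp
    _ ≤ (a₁ + a₂) * X := by gcongr

theorem summation_by_parts_noise_bound_general
    (Γ : ℕ → ℝ) (hΓ : ∀ t, 0 ≤ Γ t)
    (A₁ A₂ : ℝ) (hA₂ : 0 < A₂)
    (hD : ∀ T : ℕ, 1 ≤ T → ∑ t ∈ Finset.Icc 1 T, Γ t ≤ A₁ * Real.log T + A₂)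
    (p : ℝ) (hp0 : 0 < p) (hp1 : p < 1)
    (T₀ : ℕ) (hT₀ : Real.exp (1 / (1 - p)) < (T₀ : ℝ)) :
    ∀ T : ℕ, T₀ < T →
      ∑ t ∈ Finset.Icc T₀ (T - 1), Γ t * ((t : ℝ) ^ (1 - p) / Real.log t) ≤
        (A₁ + A₂) * ((T : ℝ) - 1) ^ (1 - p) := by
  intro T hT
  obtain ⟨S, rfl⟩ : ∃ S, T = S + 1 := ⟨T - 1, by omega⟩
  have hS : T₀ ≤ S := by omega
  have hc : 0 < 1 - p := by linarith
  have hT₀S : (T₀ : ℝ) ≤ S := by exact_mod_cast hS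
  have hT₀1 : 1 ≤ T₀ := by exact_mod_cast (exp_pos _).trans hT₀
  have hlogS : 1 ≤ log S := by
    rw [le_log_iff_exp_le (by linarith [exp_pos (1 / (1 - p))])]
    refine (exp_le_exp.2 ?_).trans (hT₀.le.trans hT₀S)
    rw [le_div_iff₀ hc]; linarith
  have hweights : ∀ t ∈ Icc T₀ S, (t : ℝ) ^ (1 - p) / log t ≤ (S : ℝ) ^ (1 - p) / log S :=
    fun t ht ↦ rpow_div_log_le_rpow_div_log hc (hT₀.le.trans (by exact_mod_cast (mem_Icc.1 ht).1))
      (by exact_mod_cast (mem_Icc.1 ht).2)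
  have hpartial : ∑ t ∈ Icc T₀ S, Γ t ≤ A₁ * log S + A₂ :=
    (sum_le_sum_of_subset_of_nonneg (Icc_subset_Icc_left hT₀1) fun t _ _ ↦ hΓ t).trans
      (hD S (hT₀1.trans (hS)))
  rw [show S + 1 - 1 = S from rfl, show ((S + 1 : ℕ) : ℝ) - 1 = S by push_cast; ring]
  calc ∑ t ∈ Icc T₀ S, Γ t * ((t : ℝ) ^ (1 - p) / log t)
      ≤ ∑ t ∈ Icc T₀ S, Γ t * ((S : ℝ) ^ (1 - p) / log S) :=
        sum_le_sum fun t ht ↦ mul_le_mul_of_nonneg_left (hweights t ht) (hΓ t)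
    _ = (∑ t ∈ Icc T₀ S, Γ t) * ((S : ℝ) ^ (1 - p) / log S) := by rw [sum_mul]
    _ ≤ (A₁ * log S + A₂) * ((S : ℝ) ^ (1 - p) / log S) := by gcongr
    _ ≤ (A₁ + A₂) * (S : ℝ) ^ (1 - p) := mul_add_mul_div_le hA₂.le hlogS (by positivity)

/-- **Summation-by-parts noise bound** (Lemma 7): if the partial sums of the nonnegative
sequence `Γ` satisfy `∑_{t=1}^T Γ_t ≤ A₁ ln T + A₂`, `p ∈ (0,1)` and
`f(t) = t^{1-p}/ln t`, then for every integer `T₀ > e^{1/(1-p)}` and every `T > T₀`,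
`∑_{t=T₀}^{T-1} Γ_t f(t) ≤ (A₁ + A₂) (T-1)^{1-p}`. -/
theorem summation_by_parts_noise_bound
    (Γ : ℕ → ℝ) (hΓ : ∀ t, 0 ≤ Γ t)
    (A₁ A₂ : ℝ) (hA₁ : 0 < A₁) (hA₂ : 0 < A₂)
    (hD : ∀ T : ℕ, 1 ≤ T → ∑ t ∈ Finset.Icc 1 T, Γ t ≤ A₁ * Real.log T + A₂)
    (p : ℝ) (hp0 : 0 < p) (hp1 : p < 1)
    (T₀ : ℕ) (hT₀ : Real.exp (1 / (1 - p)) < (T₀ : ℝ)) :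
    ∀ T : ℕ, T₀ < T →
      ∑ t ∈ Finset.Icc T₀ (T - 1), Γ t * ((t : ℝ) ^ (1 - p) / Real.log t) ≤
        (A₁ + A₂) * ((T : ℝ) - 1) ^ (1 - p) :=
  summation_by_parts_noise_bound_general Γ hΓ A₁ A₂ hA₂ hD p hp0 hp1 T₀ hT₀
end
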